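/- In the setting of loopless-SVRG, where each worker updates wᵢ⁺ = x with probability p and wᵢ⁺ = wᵢ with probability 1 − p (independently), and σ² = (1/(nm))∑ᵢ∑ⱼ‖∇f_{ij}(wᵢ) − ∇f_{ij}(x*)‖² with x* a minimizer of f = (1/(nm))∑ᵢ∑ⱼ f_{ij} and each f_{ij} convex and L-smooth, one has E[σ⁺²] ≤ (1 − p)σ² + 2Lp(f(x) − f(x*)). -/

import Mathlib

/-!
The coin flip is already averaged out, so the `(1 - p)` terms cancel and it remains to bound
`(1/(nm)) ∑ ‖∇f_ij(x) - ∇f_ij(x*)‖²` by `2L (f(x) - f(x*))`. Termwise this is the cocoercivity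
bound `‖∇h(x) - ∇h(y)‖² ≤ 2L D_h(x, y)` for a convex `L`-smooth `h`: the function
`h - ⟪∇h(y), ·⟫` is minimized at `y`, and one gradient step of length `1/L` from `x` lowers it by
at least `‖∇h(x) - ∇h(y)‖² / (2L)`. Summing, the linear parts of the Bregman divergences
`D_{f_ij}(x, x*)` add up to `⟪∇f(x*), x - x*⟫ = 0`, since `x*` minimizes `f`.
-/

open Set InnerProductSpace
open scoped RealInnerProductSpace

section GradientLipschitz

variable {E : Type*} [NormedAddCommGroup E] [InnerProductSpace ℝ E] [CompleteSpace E]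
  {f : E → ℝ} {g : E → E} {L : ℝ}

theorem HasGradientAt.hasDerivAt_comp_add_smul {x u v : E} {t : ℝ}
    (hf : HasGradientAt f v (x + t • u)) :
    HasDerivAt (fun s : ℝ => f (x + s • u)) ⟪v, u⟫ t := by
  have hline : HasDerivAt (fun s : ℝ => x + s • u) u t := by
    simpa using ((hasDerivAt_id t).smul_const u).const_add x
  have := hf.hasFDerivAt.comp_hasDerivAt t hline
  rwa [toDual_apply_apply] at this

theorem ConvexOn.add_inner_le_of_hasGradientAt {v x z : E} (hconv : ConvexOn ℝ univ f)
    (hf : HasGradientAt f v x) : f x + ⟪v, z - x⟫ ≤ f z := by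
  have hline : ConvexOn ℝ univ (fun s : ℝ => f (x + s • (z - x))) := by
    simpa [Function.comp_def, AffineMap.lineMap_apply, add_comm]
      using hconv.comp_affineMap (AffineMap.lineMap x z)
  have hder : HasDerivAt (fun s : ℝ => f (x + s • (z - x))) ⟪v, z - x⟫ 0 :=
    HasGradientAt.hasDerivAt_comp_add_smul (by simpa using hf)
  have := hline.le_slope_of_hasDerivAt (mem_univ 0) (mem_univ 1) one_pos hder
  simp only [slope, sub_zero, inv_one, one_smul, add_sub_cancel, zero_smul, add_zero, vsub_eq_sub,
    smul_eq_mul, one_mul] at this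
  linarith

theorem le_add_inner_add_sq_of_lipschitz_gradient (hgrad : ∀ y, HasGradientAt f (g y) y)
    (hlip : ∀ y z, ‖g y - g z‖ ≤ L * ‖y - z‖) (x z : E) :
    f z ≤ f x + ⟪g x, z - x⟫ + L / 2 * ‖z - x‖ ^ 2 := by
  set u := z - x
  set φ : ℝ → ℝ := fun t => f (x + t • u) - t * ⟪g x, u⟫ - L / 2 * ‖u‖ ^ 2 * t ^ 2
  have hφ : ∀ t, HasDerivAt φ (⟪g (x + t • u), u⟫ - ⟪g x, u⟫ - L * ‖u‖ ^ 2 * t) t := by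
    intro t
    refine ((((hgrad (x + t • u)).hasDerivAt_comp_add_smul).sub
      ((hasDerivAt_id t).mul_const ⟪g x, u⟫)).sub
      ((hasDerivAt_pow 2 t).const_mul (L / 2 * ‖u‖ ^ 2))).congr_deriv ?_
    push_cast; ring
  have hφ' : ∀ t ∈ interior (Ici (0 : ℝ)),
      ⟪g (x + t • u), u⟫ - ⟪g x, u⟫ - L * ‖u‖ ^ 2 * t ≤ 0 := by
    intro t ht
    rw [interior_Ici, mem_Ioi] at ht
    have hlipt : ‖g (x + t • u) - g x‖ ≤ L * t * ‖u‖ := by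
      simpa [norm_smul, abs_of_pos ht, mul_assoc] using hlip (x + t • u) x
    have hcs : ⟪g (x + t • u), u⟫ - ⟪g x, u⟫ ≤ L * ‖u‖ ^ 2 * t :=
      calc ⟪g (x + t • u), u⟫ - ⟪g x, u⟫ = ⟪g (x + t • u) - g x, u⟫ := (inner_sub_left ..).symm
        _ ≤ ‖g (x + t • u) - g x‖ * ‖u‖ := real_inner_le_norm _ _
        _ ≤ L * t * ‖u‖ * ‖u‖ := by gcongr
        _ = L * ‖u‖ ^ 2 * t := by ring
    linarith
  have hanti : AntitoneOn φ (Ici 0) :=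
    antitoneOn_of_hasDerivWithinAt_nonpos (convex_Ici 0)
      (fun t _ => (hφ t).continuousAt.continuousWithinAt) (fun t _ => (hφ t).hasDerivWithinAt) hφ'
  have := hanti self_mem_Ici (mem_Ici.mpr zero_le_one) zero_le_one
  simp only [one_smul, add_sub_cancel, one_mul, one_pow, mul_one, zero_smul, add_zero, zero_mul,
    sub_zero, ne_eq, OfNat.ofNat_ne_zero, not_false_eq_true, zero_pow, mul_zero, φ, u] at this
  linarith

theorem sq_norm_gradient_le_of_gradient_eq_zero (hL : 0 < L) (hconv : ConvexOn ℝ univ f)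
    (hgrad : ∀ y, HasGradientAt f (g y) y) (hlip : ∀ y z, ‖g y - g z‖ ≤ L * ‖y - z‖)
    {y : E} (hy : g y = 0) (x : E) :
    ‖g x‖ ^ 2 ≤ 2 * L * (f x - f y) := by
  have hmin := hconv.add_inner_le_of_hasGradientAt (z := x - L⁻¹ • g x) (hgrad y)
  have hstep := le_add_inner_add_sq_of_lipschitz_gradient hgrad hlip x (x - L⁻¹ • g x)
  rw [hy, inner_zero_left, add_zero] at hmin
  rw [sub_sub_cancel_left, inner_neg_right, real_inner_smul_right, real_inner_self_eq_norm_sq,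
    norm_neg, norm_smul, Real.norm_of_nonneg (inv_nonneg.mpr hL.le)] at hstep
  have hdescent : f y ≤ f x - ‖g x‖ ^ 2 / (2 * L) := by
    calc f y ≤ f (x - L⁻¹ • g x) := hmin
      _ ≤ f x + -(L⁻¹ * ‖g x‖ ^ 2) + L / 2 * (L⁻¹ * ‖g x‖) ^ 2 := hstep
      _ = f x - ‖g x‖ ^ 2 / (2 * L) := by field_simp; ring
  exact (div_le_iff₀' (by positivity)).mp (by linarith)

theorem sq_norm_sub_gradient_le_bregman (hL : 0 < L) (hconv : ConvexOn ℝ univ f)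
    (hgrad : ∀ y, HasGradientAt f (g y) y) (hlip : ∀ y z, ‖g y - g z‖ ≤ L * ‖y - z‖) (x y : E) :
    ‖g x - g y‖ ^ 2 ≤ 2 * L * (f x - f y - ⟪g y, x - y⟫) := by
  have hconv' : ConvexOn ℝ univ (fun w => f w - ⟪g y, w⟫) :=
    hconv.sub ((innerₛₗ ℝ (g y)).concaveOn convex_univ)
  have hgrad' : ∀ w, HasGradientAt (fun w => f w - ⟪g y, w⟫) (g w - g y) w := fun w => by
    have := (hgrad w).hasFDerivAt.fun_sub (toDual ℝ E (g y)).hasFDerivAt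
    rw [← map_sub] at this
    simpa only [toDual_apply_apply, LinearIsometryEquiv.symm_apply_apply] using this.hasGradientAt
  have := sq_norm_gradient_le_of_gradient_eq_zero hL hconv' hgrad'
    (fun a b => by simpa only [sub_sub_sub_cancel_right] using hlip a b) (sub_self (g y)) x
  rw [inner_sub_right]
  linarith

end GradientLipschitz

theorem lsvrg_reference_points_contraction_general (d n m : ℕ)
    (L p : ℝ) (hL : 0 < L) (hp0 : 0 ≤ p)
    (f : Fin n → Fin m → EuclideanSpace ℝ (Fin d) → ℝ)
    (g : Fin n → Fin m → EuclideanSpace ℝ (Fin d) → EuclideanSpace ℝ (Fin d))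
    (hconv : ∀ i j, ConvexOn ℝ Set.univ (f i j))
    (hgrad : ∀ i j y, HasGradientAt (f i j) (g i j y) y)
    (hlip : ∀ i j y z, ‖g i j y - g i j z‖ ≤ L * ‖y - z‖)
    (xstar : EuclideanSpace ℝ (Fin d))
    (hmin : ∀ y, (1 / (n * m) : ℝ) * ∑ i, ∑ j, f i j xstar
        ≤ (1 / (n * m) : ℝ) * ∑ i, ∑ j, f i j y)
    (x : EuclideanSpace ℝ (Fin d)) (w : Fin n → EuclideanSpace ℝ (Fin d)) :
    (1 / (n * m) : ℝ) * ∑ i, ∑ j,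
        (p * ‖g i j x - g i j xstar‖ ^ 2 + (1 - p) * ‖g i j (w i) - g i j xstar‖ ^ 2)
      ≤ (1 - p) * ((1 / (n * m) : ℝ) * ∑ i, ∑ j, ‖g i j (w i) - g i j xstar‖ ^ 2)
        + 2 * L * p * ((1 / (n * m) : ℝ) * ∑ i, ∑ j, f i j x
                        - (1 / (n * m) : ℝ) * ∑ i, ∑ j, f i j xstar) := by
  set c : ℝ := 1 / (n * m)
  have hc : 0 ≤ c := by positivity
  have hstat : c * ∑ i, ∑ j, ⟪g i j xstar, x - xstar⟫ = 0 := by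
    have hF : HasFDerivAt (fun y => c * ∑ i, ∑ j, f i j y)
        (c • ∑ i, ∑ j, toDual ℝ _ (g i j xstar)) xstar :=
      (HasFDerivAt.fun_sum fun i _ => HasFDerivAt.fun_sum fun j _ =>
        (hgrad i j xstar).hasFDerivAt).const_mul c
    have hloc : IsLocalMin (fun y => c * ∑ i, ∑ j, f i j y) xstar := .of_forall hmin
    have := congrArg (· (x - xstar)) (hloc.hasFDerivAt_eq_zero hF)
    simpa [toDual_apply_apply] using this
  have hbregman : ∑ i, ∑ j, ‖g i j x - g i j xstar‖ ^ 2
      ≤ ∑ i, ∑ j, 2 * L * (f i j x - f i j xstar - ⟪g i j xstar, x - xstar⟫) :=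
    Finset.sum_le_sum fun i _ => Finset.sum_le_sum fun j _ =>
      sq_norm_sub_gradient_le_bregman hL (hconv i j) (hgrad i j) (hlip i j) x xstar
  simp only [Finset.sum_add_distrib, Finset.sum_sub_distrib, ← Finset.mul_sum] at hbregman ⊢
  linear_combination mul_le_mul_of_nonneg_left hbregman (mul_nonneg hc hp0) - 2 * L * p * hstat

theorem lsvrg_reference_points_contraction (d n m : ℕ) (hn : 0 < n) (hm : 0 < m)
    (L p : ℝ) (hL : 0 < L) (hp0 : 0 ≤ p) (hp1 : p ≤ 1)
    (f : Fin n → Fin m → EuclideanSpace ℝ (Fin d) → ℝ)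
    (g : Fin n → Fin m → EuclideanSpace ℝ (Fin d) → EuclideanSpace ℝ (Fin d))
    (hconv : ∀ i j, ConvexOn ℝ Set.univ (f i j))
    (hgrad : ∀ i j y, HasGradientAt (f i j) (g i j y) y)
    (hlip : ∀ i j y z, ‖g i j y - g i j z‖ ≤ L * ‖y - z‖)
    (xstar : EuclideanSpace ℝ (Fin d))
    (hmin : ∀ y, (1 / (n * m) : ℝ) * ∑ i, ∑ j, f i j xstar
        ≤ (1 / (n * m) : ℝ) * ∑ i, ∑ j, f i j y)
    (x : EuclideanSpace ℝ (Fin d)) (w : Fin n → EuclideanSpace ℝ (Fin d)) :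
    (1 / (n * m) : ℝ) * ∑ i, ∑ j,
        (p * ‖g i j x - g i j xstar‖ ^ 2 + (1 - p) * ‖g i j (w i) - g i j xstar‖ ^ 2)
      ≤ (1 - p) * ((1 / (n * m) : ℝ) * ∑ i, ∑ j, ‖g i j (w i) - g i j xstar‖ ^ 2)
        + 2 * L * p * ((1 / (n * m) : ℝ) * ∑ i, ∑ j, f i j x
                        - (1 / (n * m) : ℝ) * ∑ i, ∑ j, f i j xstar) :=
  lsvrg_reference_points_contraction_general d n m L p hL hp0 f g hconv hgrad hlip xstar hmin x w
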